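/- For all integers m ≥ 0 and n ≥ 1, and for all s ∈ ℝ and t > 0, L̂_d applied to the function (s,t) ↦ t^m (d(t)−s)^n ψ̂₀(s,t) equals (m t^{m−1}(d(t)−s)^n − ε n(n−1) t^m (d(t)−s)^{n−2}) ψ̂₀(s,t) + 2√(ε/(πt)) n t^m (d(t)−s)^{n−1} Ê(s,t). -/

import Mathlib

/-- The complementary error function `erfc z = (2/√π) ∫_z^∞ e^{-u²} du`. -/
noncomputable def erfc (z : ℝ) : ℝ :=
  (2 / Real.sqrt Real.pi) * ∫ u in Set.Ioi z, Real.exp (-u ^ 2)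

/-- `ψ̂₀(s,t) = erfc((d(t)-s)/(2√(εt)))`. -/
noncomputable def psi0 (ε : ℝ) (d : ℝ → ℝ) (s t : ℝ) : ℝ :=
  erfc ((d t - s) / (2 * Real.sqrt (ε * t)))

/-- `Ê(s,t) = exp(-(s-d(t))²/(4εt))`. -/
noncomputable def Ehat (ε : ℝ) (d : ℝ → ℝ) (s t : ℝ) : ℝ :=
  Real.exp (-(s - d t) ^ 2 / (4 * ε * t))

/-- The operator `L̂_d F = -ε F_ss + â(d(t),t) F_s + F_t`. -/
noncomputable def Ld (ε : ℝ) (a : ℝ → ℝ → ℝ) (d : ℝ → ℝ) (F : ℝ → ℝ → ℝ) (s t : ℝ) : ℝ :=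
  -ε * iteratedDeriv 2 (fun x => F x t) s
    + a (d t) t * deriv (fun x => F x t) s
    + deriv (fun τ => F s τ) t

/-!
ψ̂₀ is a self-similar solution of the advected heat equation: since `d' = â(d, t)`, the drift
term of `L̂_d` cancels the transport of the similarity variable `(d(t) - s)/(2√(εt))`, and
`L̂_d ψ̂₀ = 0`. As `L̂_d` is second order in `s` and first order in `t`, it obeys the Leibniz rule
`L̂_d (g ψ) = (L̂_d g) ψ + g L̂_d ψ - 2ε g_s ψ_s`. For `g = t^m (d(t) - s)^n` the first term is the
polynomial part of the formula, and with `ψ̂₀_s = Ê/√(πεt)` the cross term is the `Ê` part.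
-/

open Real MeasureTheory Set

theorem hasDerivAt_integral_Ioi {f : ℝ → ℝ} (hf : Integrable f) (hc : Continuous f) (z : ℝ) :
    HasDerivAt (fun x => ∫ u in Ioi x, f u) (-f z) z := by
  have hsplit : (fun x => ∫ u in Ioi x, f u) = fun x => (∫ u in x..0, f u) + ∫ u in Ioi 0, f u :=
    funext fun x =>
      (intervalIntegral.integral_interval_add_Ioi hf.integrableOn hf.integrableOn).symm
  rw [hsplit]
  exact (intervalIntegral.integral_hasDerivAt_left hf.intervalIntegrable
    (hc.stronglyMeasurableAtFilter _ _) hc.continuousAt).add_const _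

theorem hasDerivAt_erfc (z : ℝ) : HasDerivAt erfc (-(2 / √π) * exp (-z ^ 2)) z := by
  have hf : Integrable fun u : ℝ => exp (-u ^ 2) := by
    simpa using integrable_exp_neg_mul_sq one_pos
  have := (hasDerivAt_integral_Ioi hf (by fun_prop) z).const_mul (2 / √π)
  rwa [mul_neg, ← neg_mul] at this

theorem hasDerivAt_const_mul_const_sub_pow (c b : ℝ) (k : ℕ) (x : ℝ) :
    HasDerivAt (fun y => c * (b - y) ^ k) (-(k * (c * (b - x) ^ (k - 1)))) x :=
  ((((hasDerivAt_id' x).const_sub b).fun_pow k).const_mul c).congr_deriv (by ring)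

section Ld

variable {ε : ℝ} {a : ℝ → ℝ → ℝ} {d : ℝ → ℝ} {s t : ℝ}

theorem Ld_mul {f g : ℝ → ℝ → ℝ}
    (hf : Differentiable ℝ (f · t)) (hg : Differentiable ℝ (g · t))
    (hf' : DifferentiableAt ℝ (deriv (f · t)) s) (hg' : DifferentiableAt ℝ (deriv (g · t)) s)
    (hft : DifferentiableAt ℝ (f s ·) t) (hgt : DifferentiableAt ℝ (g s ·) t) :
    Ld ε a d (fun x τ => f x τ * g x τ) s t
      = Ld ε a d f s t * g s t + f s t * Ld ε a d g s t
        - 2 * ε * deriv (f · t) s * deriv (g · t) s := by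
  have hderiv : deriv (fun x => f x t * g x t)
      = fun x => deriv (f · t) x * g x t + f x t * deriv (g · t) x :=
    funext fun x => deriv_fun_mul (hf x) (hg x)
  simp only [Ld, iteratedDeriv_succ, iteratedDeriv_zero, hderiv]
  rw [deriv_fun_add (hf'.fun_mul (hg s)) ((hf s).fun_mul hg'), deriv_fun_mul hf' (hg s),
    deriv_fun_mul (hf s) hg', deriv_fun_mul hft hgt]
  ring

theorem exp_neg_sq_psi0_arg (hεt : 0 ≤ ε * t) (x : ℝ) :
    exp (-((d t - x) / (2 * √(ε * t))) ^ 2) = Ehat ε d x t := by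
  rw [Ehat, div_pow, mul_pow, sq_sqrt hεt]
  ring_nf

theorem hasDerivAt_Ehat_space (x : ℝ) :
    HasDerivAt (Ehat ε d · t) (Ehat ε d x t * ((d t - x) / (2 * ε * t))) x := by
  have hsq : HasDerivAt (fun y => -(y - d t) ^ 2 / (4 * ε * t)) ((d t - x) / (2 * ε * t)) x := by
    refine ((((hasDerivAt_id' x).sub_const (d t)).fun_pow 2).fun_neg.div_const
      (4 * ε * t)).congr_deriv ?_
    ring
  exact (hasDerivAt_exp _).comp x hsq

theorem hasDerivAt_psi0_space (hεt : 0 < ε * t) (x : ℝ) :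
    HasDerivAt (psi0 ε d · t) (Ehat ε d x t / √(π * (ε * t))) x := by
  have hz : HasDerivAt (fun y => (d t - y) / (2 * √(ε * t))) (-1 / (2 * √(ε * t))) x :=
    ((hasDerivAt_id x).const_sub (d t)).div_const _
  refine ((hasDerivAt_erfc _).comp x hz).congr_deriv ?_
  rw [exp_neg_sq_psi0_arg hεt.le, sqrt_mul pi_pos.le]
  have : 0 < √(ε * t) := sqrt_pos.2 hεt
  field_simp

theorem deriv_psi0_space (hεt : 0 < ε * t) :
    deriv (psi0 ε d · t) = fun x => Ehat ε d x t / √(π * (ε * t)) :=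
  funext fun x => (hasDerivAt_psi0_space hεt x).deriv

theorem hasDerivAt_psi0_time (hε : 0 < ε) (ht : 0 < t) {d' : ℝ} (hd : HasDerivAt d d' t) :
    HasDerivAt (psi0 ε d s ·) (Ehat ε d s t / √(π * (ε * t)) * (-d' + (d t - s) / (2 * t))) t := by
  have hεt : 0 < ε * t := mul_pos hε ht
  have hq : 0 < √(ε * t) := sqrt_pos.2 hεt
  have hsqrt : HasDerivAt (fun τ => 2 * √(ε * τ)) (2 * (ε / (2 * √(ε * t)))) t := by
    have := ((hasDerivAt_id t).const_mul ε).sqrt hεt.ne'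
    simpa using this.const_mul 2
  have hz := (hd.sub_const s).fun_div hsqrt (by positivity)
  refine ((hasDerivAt_erfc _).comp t hz).congr_deriv ?_
  rw [exp_neg_sq_psi0_arg hεt.le, sqrt_mul pi_pos.le]
  have hq2 : √(ε * t) ^ 2 = ε * t := sq_sqrt hεt.le
  field_simp
  rw [hq2]
  ring

theorem Ld_psi0_eq_zero (hε : 0 < ε) (ht : 0 < t) (hd : HasDerivAt d (a (d t) t) t) :
    Ld ε a d (psi0 ε d) s t = 0 := by
  have hεt : 0 < ε * t := mul_pos hε ht
  have hss : HasDerivAt (fun x => Ehat ε d x t / √(π * (ε * t)))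
      (Ehat ε d s t * ((d t - s) / (2 * ε * t)) / √(π * (ε * t))) s :=
    (hasDerivAt_Ehat_space s).div_const _
  simp only [Ld, iteratedDeriv_succ, iteratedDeriv_zero, deriv_psi0_space hεt, hss.deriv,
    (hasDerivAt_psi0_time hε ht hd).deriv]
  field_simp
  ring

theorem Ld_monomial (m n : ℕ) (hd : HasDerivAt d (a (d t) t) t) :
    Ld ε a d (fun x τ => τ ^ m * (d τ - x) ^ n) s t
      = m * t ^ (m - 1) * (d t - s) ^ n - ε * n * (n - 1) * t ^ m * (d t - s) ^ (n - 2) := by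
  have hspace := hasDerivAt_const_mul_const_sub_pow (t ^ m) (d t)
  have htime : HasDerivAt (fun τ => τ ^ m * (d τ - s) ^ n)
      (m * t ^ (m - 1) * (d t - s) ^ n + t ^ m * (n * (d t - s) ^ (n - 1) * a (d t) t)) t :=
    (hasDerivAt_pow m t).mul ((hd.sub_const s).fun_pow n)
  have hss : HasDerivAt (fun x => -(n * (t ^ m * (d t - x) ^ (n - 1))))
      (n * ((n - 1 : ℕ) * t ^ m * (d t - s) ^ (n - 1 - 1))) s :=
    ((hspace (n - 1) s).const_mul (n : ℝ)).fun_neg.congr_deriv (by ring)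
  simp only [Ld, iteratedDeriv_succ, iteratedDeriv_zero, funext fun x => (hspace n x).deriv,
    hss.deriv, htime.deriv]
  have hcast : (n : ℝ) * (n - 1 : ℕ) = n * (n - 1) := by cases n <;> simp
  rw [Nat.sub_sub]
  linear_combination (-ε * t ^ m * (d t - s) ^ (n - 2)) * hcast

end Ld

theorem stmt_7_general
    (ε : ℝ) (hε : 0 < ε)
    (a : ℝ → ℝ → ℝ)
    (d : ℝ → ℝ)
    (hdODE : ∀ t : ℝ, 0 ≤ t → HasDerivAt d (a (d t) t) t) :
    ∀ m n : ℕ, 1 ≤ n → ∀ s t : ℝ, 0 < t →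
      Ld ε a d (fun s' t' => t' ^ m * (d t' - s') ^ n * psi0 ε d s' t') s t
        = ((m : ℝ) * t ^ (m - 1) * (d t - s) ^ n
            - ε * (n : ℝ) * ((n : ℝ) - 1) * t ^ m * (d t - s) ^ (n - 2)) * psi0 ε d s t
          + 2 * Real.sqrt (ε / (Real.pi * t)) * (n : ℝ) * t ^ m * (d t - s) ^ (n - 1)
            * Ehat ε d s t := by
  intro m n _ s t ht
  have hd := hdODE t ht.le
  have hεt : 0 < ε * t := mul_pos hε ht
  have hspace := hasDerivAt_const_mul_const_sub_pow (t ^ m) (d t) n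
  have hderiv := funext fun x => (hspace x).deriv
  rw [Ld_mul (f := fun x τ => τ ^ m * (d τ - x) ^ n) (g := psi0 ε d)
    (fun x => (hspace x).differentiableAt) (fun x => (hasDerivAt_psi0_space hεt x).differentiableAt)
    (by rw [hderiv]; fun_prop)
    (by rw [deriv_psi0_space hεt]; exact ((hasDerivAt_Ehat_space s).div_const _).differentiableAt)
    ((hasDerivAt_pow m t).mul ((hd.sub_const s).fun_pow n)).differentiableAt
    (hasDerivAt_psi0_time hε ht hd).differentiableAt,
    Ld_psi0_eq_zero hε ht hd, Ld_monomial m n hd, hderiv, deriv_psi0_space hεt]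
  have hsqrt : √(ε / (π * t)) = ε / √(π * (ε * t)) := by
    rw [eq_div_iff (by positivity), ← sqrt_mul (by positivity),
      show ε / (π * t) * (π * (ε * t)) = ε ^ 2 by field_simp, sqrt_sq hε.le]
  rw [hsqrt]
  ring

/-- for all integers `m ≥ 0` and `n ≥ 1`, `Ld` applied to
`(s,t) ↦ t^m (d t - s)^n psi0 s t` equals
`(m t^(m-1) (d t - s)^n - ε n (n-1) t^m (d t - s)^(n-2)) psi0 s t
  + 2 sqrt(ε/(πt)) n t^m (d t - s)^(n-1) Ehat s t`
(where for `m = 0` the first term vanishes and for `n = 1` the term with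
coefficient `n(n-1)` vanishes). -/
theorem stmt_7
    (ε d₀ : ℝ) (hε : 0 < ε) (hd₀ : d₀ ∈ Set.Ioo (0 : ℝ) 1)
    (a : ℝ → ℝ → ℝ) (haC1 : ContDiff ℝ 1 (fun p : ℝ × ℝ => a p.1 p.2))
    (hapos : ∀ s t : ℝ, 0 ≤ t → 0 < a s t)
    (d : ℝ → ℝ) (hdC1 : ContDiff ℝ 1 d)
    (hdODE : ∀ t : ℝ, 0 ≤ t → HasDerivAt d (a (d t) t) t)
    (hd0 : d 0 = d₀) :
    ∀ m n : ℕ, 1 ≤ n → ∀ s t : ℝ, 0 < t →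
      Ld ε a d (fun s' t' => t' ^ m * (d t' - s') ^ n * psi0 ε d s' t') s t
        = ((m : ℝ) * t ^ (m - 1) * (d t - s) ^ n
            - ε * (n : ℝ) * ((n : ℝ) - 1) * t ^ m * (d t - s) ^ (n - 2)) * psi0 ε d s t
          + 2 * Real.sqrt (ε / (Real.pi * t)) * (n : ℝ) * t ^ m * (d t - s) ^ (n - 1)
            * Ehat ε d s t :=
  stmt_7_general ε hε a d hdODE
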